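/- arXiv:1401.6661 — 2 statements merged into one kernel-verified Lean document; each statement's English description precedes it below -/
import Mathlib

section
/- Let m, k, j be natural numbers with j ≤ k ≤ m. If the binomial coefficient C(m − k, j) is odd, then ⌊k/2⌋ + ⌊m/2⌋ = ⌊(k − j)/2⌋ + ⌊(m + j)/2⌋. -/
lemma aux_even_choose (n j : ℕ) (hn : Even n) (hj : Odd j) : Even (n.choose j) := by
  obtain ⟨b, rfl⟩ : ∃ b, j = b + 1 := ⟨j - 1, by rcases hj with ⟨c, hc⟩; omega⟩
  rcases n with _ | a
  · simp [Nat.choose]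
  · have h1 := Nat.add_one_mul_choose_eq a b
    have h2 : Even ((a + 1) * a.choose b) := hn.mul_right _
    rw [h1] at h2
    rcases Nat.even_mul.mp h2 with h | h
    · exact h
    · exact absurd h (Nat.not_even_iff_odd.mpr hj)

/-- If `j ≤ k ≤ m` and `C(m − k, j)` is odd then
`⌊k/2⌋ + ⌊m/2⌋ = ⌊(k − j)/2⌋ + ⌊(m + j)/2⌋`. -/
theorem stmt_4 (m k j : ℕ) (hjk : j ≤ k) (hkm : k ≤ m)
    (h : Odd ((m - k).choose j)) :
    k / 2 + m / 2 = (k - j) / 2 + (m + j) / 2 := by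
  rcases Nat.even_or_odd j with hj | hj
  · obtain ⟨c, rfl⟩ := hj; omega
  · have hmk : Odd (m - k) := by
      by_contra hc
      exact (Nat.not_odd_iff_even.mpr
        (aux_even_choose _ _ (Nat.not_odd_iff_even.mp hc) hj)) h
    obtain ⟨a, ha⟩ := hmk
    obtain ⟨b, rfl⟩ := hj
    omega
end

section
/- Let R be a commutative ring, n ≥ 0, and x_1, …, x_n, t elements of R. Then for every 0 ≤ r ≤ n, the r-th elementary symmetric polynomial satisfies σ_r(x_1 + t, …, x_n + t) = Σ_{j=0}^{r} C(n − j, r − j) · σ_j(x_1, …, x_n) · t^{r−j}. -/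
/-!
Expanding `∏_{i ∈ v} (x_i + t)` over an `r`-set `v` gives `∑_{u ⊆ v} x^u t^(r - #u)`. Summing
over `v` and swapping the sums, each `j`-set `u` is counted once for every `r`-set containing it,
that is `C(n - j, r - j)` times.
-/

open Finset

/-- The `r`-th elementary symmetric function of the elements `x 0, …, x (n-1)` of a
commutative ring. -/
def elemSymm {R : Type*} [CommRing R] (n : ℕ) (x : Fin n → R) (r : ℕ) : R :=
  ∑ s ∈ Finset.univ.powersetCard r, ∏ i ∈ s, x i

namespace Finset

theorem prod_add_const_eq_sum_powersetCard {ι R : Type*} [CommSemiring R]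
    (s : Finset ι) (x : ι → R) (t : R) :
    ∏ i ∈ s, (x i + t) =
      ∑ j ∈ range (#s + 1), ∑ u ∈ s.powersetCard j, (∏ i ∈ u, x i) * t ^ (#s - j) := by
  classical
  rw [prod_add, sum_powerset]
  refine sum_congr rfl fun j _ => sum_congr rfl fun u hu => ?_
  obtain ⟨hus, rfl⟩ := mem_powersetCard.1 hu
  rw [prod_const, card_sdiff_of_subset hus]

theorem sum_powersetCard_sum_powersetCard {α M : Type*} [DecidableEq α] [AddCommMonoid M]
    (s : Finset α) (f : Finset α → M) {j r : ℕ} (hjr : j ≤ r) :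
    ∑ v ∈ s.powersetCard r, ∑ u ∈ v.powersetCard j, f u =
      (#s - j).choose (r - j) • ∑ u ∈ s.powersetCard j, f u := by
  rw [sum_comm' (t' := s.powersetCard j) (s' := fun u => {v ∈ s.powersetCard r | u ⊆ v})
    fun v u => by simp only [mem_powersetCard, mem_filter]; grind, smul_sum]
  refine sum_congr rfl fun u hu => ?_
  obtain ⟨hus, rfl⟩ := mem_powersetCard.1 hu
  rw [sum_const, card_filter_powersetCard_subset u s r hus hjr]

end Finset

theorem stmt_6_general (R : Type*) [CommRing R] (n : ℕ) (x : Fin n → R) (t : R)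
    (r : ℕ) :
    elemSymm n (fun i => x i + t) r =
      ∑ j ∈ Finset.range (r + 1),
        ((n - j).choose (r - j) : R) * elemSymm n x j * t ^ (r - j) := by
  unfold elemSymm
  calc ∑ v ∈ univ.powersetCard r, ∏ i ∈ v, (x i + t)
      = ∑ v ∈ univ.powersetCard r, ∑ j ∈ range (r + 1),
          ∑ u ∈ v.powersetCard j, (∏ i ∈ u, x i) * t ^ (r - j) :=
        sum_congr rfl fun v hv => by
          rw [prod_add_const_eq_sum_powersetCard, (mem_powersetCard.1 hv).2]
    _ = ∑ j ∈ range (r + 1), ∑ v ∈ univ.powersetCard r,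
          ∑ u ∈ v.powersetCard j, (∏ i ∈ u, x i) * t ^ (r - j) := sum_comm
    _ = _ := sum_congr rfl fun j hj => by
        rw [sum_powersetCard_sum_powersetCard _ _ (Nat.lt_succ_iff.1 (mem_range.1 hj)),
          card_univ, Fintype.card_fin, nsmul_eq_mul, ← sum_mul, mul_assoc]

/-- `σ_r(x_1 + t, …, x_n + t) = Σ_{j=0}^{r} C(n − j, r − j) σ_j(x_1, …, x_n) t^{r−j}`. -/
theorem stmt_6 (R : Type*) [CommRing R] (n : ℕ) (x : Fin n → R) (t : R)
    (r : ℕ) (hr : r ≤ n) :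
    elemSymm n (fun i => x i + t) r =
      ∑ j ∈ Finset.range (r + 1),
        ((n - j).choose (r - j) : R) * elemSymm n x j * t ^ (r - j) :=
  stmt_6_general R n x t r
end
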